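/- arXiv:2403.03341 — 3 statements merged into one kernel-verified Lean document; each statement's English description precedes it below -/
import Mathlib

section
/- For the vector fields g₁(z) = (1, 0, −z₂, −z₃, κz₂³ − z₄) and g₂(z) = (0, 1, 0, −αz₂², −θz₂z₃) on ℝ⁵, the iterated bracket [g₁,[g₁,g₂]](z) equals (0,0,0,1,0) plus a term in the fifth coordinate that is a polynomial in z₂ of degree at most 1 multiplied by z₂; in particular its fourth coordinate is 1 and first three coordinates vanish identically. -/
def g1 (κ : ℝ) : (Fin 5 → ℝ) → (Fin 5 → ℝ) :=
  fun z => ![1, 0, -z 1, -z 2, κ * (z 1)^3 - z 3]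

def g2 (α θ : ℝ) : (Fin 5 → ℝ) → (Fin 5 → ℝ) :=
  fun z => ![0, 1, 0, -α * (z 1)^2, -θ * z 1 * z 2]

/-- Lie bracket of vector fields on ℝ⁵. -/
noncomputable def lieBracket (f g : (Fin 5 → ℝ) → (Fin 5 → ℝ)) : (Fin 5 → ℝ) → (Fin 5 → ℝ) :=
  fun z => fderiv ℝ g z (f z) - fderiv ℝ f z (g z)

open ContinuousLinearMap

noncomputable def P (i : Fin 5) : (Fin 5 → ℝ) →L[ℝ] ℝ := proj i

lemma hproj (i : Fin 5) (z : Fin 5 → ℝ) :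
    HasFDerivAt (fun z : Fin 5 → ℝ => z i) (P i) z := (P i).hasFDerivAt

noncomputable def D1 (κ : ℝ) (z : Fin 5 → ℝ) : (Fin 5 → ℝ) →L[ℝ] (Fin 5 → ℝ) :=
  pi ![0, 0, -(P 1), -(P 2), (3 * κ * (z 1)^2) • P 1 - P 3]

lemma hD1 (κ : ℝ) (z : Fin 5 → ℝ) : HasFDerivAt (g1 κ) (D1 κ z) z := by
  rw [hasFDerivAt_pi']
  intro i
  fin_cases i <;> simp only [g1, D1, proj_pi, Matrix.cons_val_zero, Matrix.cons_val_one,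
    Matrix.head_cons, Matrix.cons_val_two, Matrix.tail_cons, Matrix.cons_val_three,
    Matrix.cons_val_four, Fin.isValue]
  · exact hasFDerivAt_const _ _
  · exact hasFDerivAt_const _ _
  · exact (hproj 1 z).neg
  · exact (hproj 2 z).neg
  · show HasFDerivAt (fun z : Fin 5 → ℝ => κ * (z 1)^3 - z 3)
      ((3 * κ * (z 1)^2) • P 1 - P 3) z
    have e : (fun z : Fin 5 → ℝ => κ * (z 1)^3 - z 3)
        = fun z => κ * (z 1 * (z 1 * z 1)) - z 3 := by funext z; ring
    rw [e]
    exact ((((hproj 1 z).mul ((hproj 1 z).mul (hproj 1 z))).const_mul κ).sub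
      (hproj 3 z)).congr_fderiv (by ext v; simp [P]; ring)

noncomputable def D2 (α θ : ℝ) (z : Fin 5 → ℝ) : (Fin 5 → ℝ) →L[ℝ] (Fin 5 → ℝ) :=
  pi ![0, 0, 0, (-2 * α * z 1) • P 1, (-θ * z 2) • P 1 + (-θ * z 1) • P 2]

lemma hD2 (α θ : ℝ) (z : Fin 5 → ℝ) : HasFDerivAt (g2 α θ) (D2 α θ z) z := by
  rw [hasFDerivAt_pi']
  intro i
  fin_cases i <;> simp only [g2, D2, proj_pi, Matrix.cons_val_zero, Matrix.cons_val_one,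
    Matrix.head_cons, Matrix.cons_val_two, Matrix.tail_cons, Matrix.cons_val_three,
    Matrix.cons_val_four, Fin.isValue]
  · exact hasFDerivAt_const _ _
  · exact hasFDerivAt_const _ _
  · exact hasFDerivAt_const _ _
  · show HasFDerivAt (fun z : Fin 5 → ℝ => -α * (z 1)^2) ((-2 * α * z 1) • P 1) z
    have e : (fun z : Fin 5 → ℝ => -α * (z 1)^2)
        = fun z => -α * (z 1 * z 1) := by funext z; ring
    rw [e]
    exact (((hproj 1 z).mul (hproj 1 z)).const_mul (-α)).congr_fderiv
      (by ext v; simp [P]; ring)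
  · show HasFDerivAt (fun z : Fin 5 → ℝ => -θ * z 1 * z 2)
      ((-θ * z 2) • P 1 + (-θ * z 1) • P 2) z
    exact (((hproj 1 z).const_mul (-θ)).mul (hproj 2 z)).congr_fderiv
      (by ext v; simp [P]; ring)

noncomputable def h3 (α κ θ : ℝ) : (Fin 5 → ℝ) → (Fin 5 → ℝ) :=
  fun z => ![0, 0, 1, 0, (θ - 3*κ - α) * (z 1)^2]

lemma bracket12 (α κ θ : ℝ) : lieBracket (g1 κ) (g2 α θ) = h3 α κ θ := by
  funext z
  rw [lieBracket, (hD1 κ z).fderiv, (hD2 α θ z).fderiv]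
  funext i
  fin_cases i <;>
    simp [D1, D2, h3, g1, g2, P, pi_apply] <;> ring

noncomputable def D3 (α κ θ : ℝ) (z : Fin 5 → ℝ) : (Fin 5 → ℝ) →L[ℝ] (Fin 5 → ℝ) :=
  pi ![0, 0, 0, 0, (2 * (θ - 3*κ - α) * z 1) • P 1]

lemma hD3 (α κ θ : ℝ) (z : Fin 5 → ℝ) : HasFDerivAt (h3 α κ θ) (D3 α κ θ z) z := by
  rw [hasFDerivAt_pi']
  intro i
  fin_cases i <;> simp only [h3, D3, proj_pi, Matrix.cons_val_zero, Matrix.cons_val_one,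
    Matrix.head_cons, Matrix.cons_val_two, Matrix.tail_cons, Matrix.cons_val_three,
    Matrix.cons_val_four, Fin.isValue]
  · exact hasFDerivAt_const _ _
  · exact hasFDerivAt_const _ _
  · exact hasFDerivAt_const _ _
  · exact hasFDerivAt_const _ _
  · show HasFDerivAt (fun z : Fin 5 → ℝ => (θ - 3*κ - α) * (z 1)^2)
      ((2 * (θ - 3*κ - α) * z 1) • P 1) z
    have e : (fun z : Fin 5 → ℝ => (θ - 3*κ - α) * (z 1)^2)
        = fun z => (θ - 3*κ - α) * (z 1 * z 1) := by funext z; ring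
    rw [e]
    exact (((hproj 1 z).mul (hproj 1 z)).const_mul (θ - 3*κ - α)).congr_fderiv
      (by ext v; simp [P]; ring)

/-- `[g₁,[g₁,g₂]]` has first three coordinates zero, fourth coordinate 1, and
fifth coordinate equal to `z₂` times a polynomial of degree at most 1 in `z₂`. -/
theorem bracket_g1_g1_g2 (α κ θ : ℝ) :
    ∃ a b : ℝ, ∀ z : Fin 5 → ℝ,
      lieBracket (g1 κ) (lieBracket (g1 κ) (g2 α θ)) z
        = ![0, 0, 0, 1, z 1 * (a + b * z 1)] := by
  refine ⟨0, 0, fun z => ?_⟩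
  rw [bracket12, lieBracket, (hD1 κ z).fderiv, (hD3 α κ θ z).fderiv]
  funext i
  fin_cases i <;>
    simp [D1, D3, h3, g1, P, pi_apply] <;> ring
end

section
/- Every iterated Lie bracket of length 5 of the vector fields g₁(z) = (1, 0, −z₂, −z₃, κz₂³ − z₄) and g₂(z) = (0, 1, 0, −αz₂², −θz₂z₃) vanishes identically; more precisely, if X is any bracket of length 4 in g₁, g₂, then [g₁,X] = 0 and [g₂,X] = 0 on ℝ⁵. -/
/-- `IterBracket α κ θ k X` means `X` is an iterated Lie bracket of length `k`
of the generators `g₁, g₂`. -/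
inductive IterBracket (α κ θ : ℝ) : ℕ → ((Fin 5 → ℝ) → (Fin 5 → ℝ)) → Prop
  | base1 : IterBracket α κ θ 1 (g1 κ)
  | base2 : IterBracket α κ θ 1 (g2 α θ)
  | br {j k : ℕ} {X Y : (Fin 5 → ℝ) → (Fin 5 → ℝ)} :
      IterBracket α κ θ j X → IterBracket α κ θ k Y →
      IterBracket α κ θ (j + k) (lieBracket X Y)

/-!
Give `z₁, …, z₅` the weights `1, 1, 2, 3, 4` and let `δ_c` be the dilation `z ↦ (c ^ wᵢ * zᵢ)ᵢ`.
Both `g₁` and `g₂` are homogeneous of degree `-1`, i.e. `c • g (δ_c z) = δ_c (g z)`, and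
differentiating this identity shows that bracketing fields of degrees `-a` and `-b` gives a field
of degree `-(a + b)`. An iterated bracket `X` of length `5` thus has degree `-5`, so
`X z i = c ^ (5 - wᵢ) * X (δ_c z) i` for `c ≠ 0`; letting `c → 0` gives `X z i = 0`, since every
weight is below `5`.
-/

open Filter Topology
open scoped ContDiff

section WeightedDilation

variable {ι : Type*}

noncomputable def weightedDilation (w : ι → ℕ) (c : ℝ) : (ι → ℝ) →L[ℝ] (ι → ℝ) :=
  ContinuousLinearMap.pi fun i => c ^ w i • ContinuousLinearMap.proj i

@[simp]
lemma weightedDilation_apply (w : ι → ℕ) (c : ℝ) (z : ι → ℝ) (i : ι) :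
    weightedDilation w c z i = c ^ w i * z i := rfl

/-- `X` has weighted degree `-k`. -/
def IsWeightedHomogeneousField (w : ι → ℕ) (k : ℕ) (X : (ι → ℝ) → ι → ℝ) : Prop :=
  ∀ c z, c ^ k • X (weightedDilation w c z) = weightedDilation w c (X z)

lemma IsWeightedHomogeneousField.fderiv_weightedDilation [Fintype ι] {w : ι → ℕ} {k : ℕ}
    {X : (ι → ℝ) → ι → ℝ} (hX : IsWeightedHomogeneousField w k X) (hd : Differentiable ℝ X)
    (c : ℝ) (z v : ι → ℝ) :
    c ^ k • fderiv ℝ X (weightedDilation w c z) (weightedDilation w c v) =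
      weightedDilation w c (fderiv ℝ X z v) := by
  have hleft : HasFDerivAt (fun z => weightedDilation w c (X z))
      (c ^ k • (fderiv ℝ X (weightedDilation w c z)).comp (weightedDilation w c)) z :=
    (((hd _).hasFDerivAt.comp z (weightedDilation w c).hasFDerivAt).const_smul _)
      |>.congr_of_eventuallyEq (.of_forall fun z => (hX c z).symm)
  have hright : HasFDerivAt (fun z => weightedDilation w c (X z))
      ((weightedDilation w c).comp (fderiv ℝ X z)) z :=
    (weightedDilation w c).hasFDerivAt.comp z (hd z).hasFDerivAt
  exact congrArg (· v) (hleft.unique hright)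

lemma IsWeightedHomogeneousField.eq_zero {w : ι → ℕ} {k : ℕ} {X : (ι → ℝ) → ι → ℝ}
    (hX : IsWeightedHomogeneousField w k X) (hcont : Continuous X) (hk : ∀ i, w i < k) :
    X = 0 := by
  funext z i
  set f : ℝ → ℝ := fun c => c ^ (k - w i) * X (weightedDilation w c z) i
  have hf_cont : Continuous f := by
    have : Continuous fun c => weightedDilation w c z :=
      continuous_pi fun j => by simp only [weightedDilation_apply]; fun_prop
    exact (continuous_pow _).mul ((continuous_apply i).comp (hcont.comp this))
  have hf_zero : f 0 = 0 := by simp [f, zero_pow (Nat.sub_ne_zero_of_lt (hk i))]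
  have hf_eq : ∀ᶠ c in 𝓝[≠] 0, X z i = f c := by
    refine eventually_nhdsWithin_of_forall fun c (hc : c ≠ 0) => ?_
    have h := congrFun (hX c z) i
    simp only [Pi.smul_apply, smul_eq_mul, weightedDilation_apply] at h
    have hpow : c ^ k = c ^ (k - w i) * c ^ w i := by
      rw [← pow_add, Nat.sub_add_cancel (hk i).le]
    rw [hpow, mul_right_comm, mul_comm (c ^ w i)] at h
    exact (mul_right_cancel₀ (pow_ne_zero _ hc) h).symm
  have hlim : Tendsto f (𝓝[≠] 0) (𝓝 (f 0)) :=
    hf_cont.continuousAt.tendsto.mono_left nhdsWithin_le_nhds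
  rw [hf_zero] at hlim
  show X z i = 0
  exact tendsto_nhds_unique (tendsto_const_nhds.congr' hf_eq) hlim

end WeightedDilation

lemma ContDiff.lieBracket {X Y : (Fin 5 → ℝ) → (Fin 5 → ℝ)} (hX : ContDiff ℝ ∞ X)
    (hY : ContDiff ℝ ∞ Y) : ContDiff ℝ ∞ (lieBracket X Y) :=
  ((hY.fderiv_right le_rfl).clm_apply hX).sub ((hX.fderiv_right le_rfl).clm_apply hY)

lemma IsWeightedHomogeneousField.lieBracket {w : Fin 5 → ℕ} {a b : ℕ}
    {X Y : (Fin 5 → ℝ) → (Fin 5 → ℝ)} (hX : IsWeightedHomogeneousField w a X)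
    (hY : IsWeightedHomogeneousField w b Y) (hXd : Differentiable ℝ X)
    (hYd : Differentiable ℝ Y) : IsWeightedHomogeneousField w (a + b) (lieBracket X Y) := by
  intro c z
  have hXY := hY.fderiv_weightedDilation hYd c z (X z)
  have hYX := hX.fderiv_weightedDilation hXd c z (Y z)
  rw [← hX, map_smul, smul_smul, ← pow_add, add_comm b a] at hXY
  rw [← hY, map_smul, smul_smul, ← pow_add] at hYX
  simp only [_root_.lieBracket, map_sub, ← hXY, ← hYX, smul_sub]

def weight : Fin 5 → ℕ := ![1, 1, 2, 3, 4]

lemma isWeightedHomogeneousField_g1 (κ : ℝ) : IsWeightedHomogeneousField weight 1 (g1 κ) := by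
  intro c z
  funext i
  fin_cases i <;> simp [g1, weight] <;> ring

lemma isWeightedHomogeneousField_g2 (α θ : ℝ) :
    IsWeightedHomogeneousField weight 1 (g2 α θ) := by
  intro c z
  funext i
  fin_cases i <;> simp [g2, weight] <;> ring

lemma contDiff_g1 (κ : ℝ) : ContDiff ℝ ∞ (g1 κ) := by
  rw [contDiff_pi]
  intro i
  fin_cases i <;> simp [g1] <;> fun_prop

lemma contDiff_g2 (α θ : ℝ) : ContDiff ℝ ∞ (g2 α θ) := by
  rw [contDiff_pi]
  intro i
  fin_cases i <;> simp [g2] <;> fun_prop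

lemma IterBracket.contDiff_and_isWeightedHomogeneousField {α κ θ : ℝ} {k : ℕ}
    {X : (Fin 5 → ℝ) → (Fin 5 → ℝ)} (hX : IterBracket α κ θ k X) :
    ContDiff ℝ ∞ X ∧ IsWeightedHomogeneousField weight k X := by
  induction hX with
  | base1 => exact ⟨contDiff_g1 κ, isWeightedHomogeneousField_g1 κ⟩
  | base2 => exact ⟨contDiff_g2 α θ, isWeightedHomogeneousField_g2 α θ⟩
  | br _ _ hX hY =>
    exact ⟨hX.1.lieBracket hY.1, hX.2.lieBracket hY.2 (hX.1.differentiable (by simp))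
      (hY.1.differentiable (by simp))⟩

/-- Every iterated bracket of length 5 vanishes: bracketing a generator with any
bracket of length 4 gives the zero vector field, i.e. the Lie algebra generated
by `g₁, g₂` is nilpotent of step 4. -/
theorem nilpotent_step_four (α κ θ : ℝ) (X : (Fin 5 → ℝ) → (Fin 5 → ℝ))
    (hX : IterBracket α κ θ 4 X) :
    (∀ z, lieBracket (g1 κ) X z = 0) ∧ (∀ z, lieBracket (g2 α θ) X z = 0) := by
  have hvanish {Y : (Fin 5 → ℝ) → (Fin 5 → ℝ)} (hY : IterBracket α κ θ 5 Y) : Y = 0 := by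
    obtain ⟨hsmooth, hhom⟩ := hY.contDiff_and_isWeightedHomogeneousField
    exact hhom.eq_zero hsmooth.continuous (by decide)
  exact ⟨congrFun (hvanish (.br .base1 hX)), congrFun (hvanish (.br .base2 hX))⟩
end

section
/- Suppose z : [0,∞) → ℝⁿ and ε > 0 satisfy ‖z(jε)‖ ≤ ‖z⁰‖ e^{−γ̄ j ε} for all integers j ≥ 0 and ‖z(t) − z(jε)‖ ≤ c_z ε^{1/4} ‖z(jε)‖^{1/4} for all t ∈ [jε, (j+1)ε]. If moreover ‖z⁰‖ ≤ Δ, then for all t ≥ 0, ‖z(t)‖ ≤ e^{γ̄ε/4}(Δ^{3/4} + c_z) ‖z⁰‖^{1/4} e^{−γ̄ t/4}. -/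
open Real

lemma aux_rpow_split (a D c : ℝ) (ha : 0 ≤ a) (hD : 0 ≤ D) (hc : 0 ≤ c)
    (h1 : a ≤ D) (h2 : a ≤ c) : a ≤ D ^ ((3:ℝ)/4) * c ^ ((1:ℝ)/4) := by
  have key : D ^ ((3:ℝ)/4) * c ^ ((1:ℝ)/4) = (D ^ 3 * c) ^ ((1:ℝ)/4) := by
    rw [Real.mul_rpow (by positivity) hc, ← Real.rpow_natCast D 3,
      ← Real.rpow_mul hD]
    norm_num
  have ha4 : a = (a ^ 4) ^ ((1:ℝ)/4) := by
    rw [← Real.rpow_natCast a 4, ← Real.rpow_mul ha]; norm_num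
  rw [key, ha4]
  apply Real.rpow_le_rpow (by positivity) _ (by norm_num)
  calc a ^ 4 = a ^ 3 * a := by ring
    _ ≤ D ^ 3 * c := mul_le_mul (pow_le_pow_left₀ ha h1 3) h2 ha (by positivity)

theorem continuous_time_exponential_convergence (n : ℕ) (γbar ε cz Δ : ℝ)
    (hγ : 0 < γbar) (hε : 0 < ε) (hε1 : ε ≤ 1) (hcz : 0 < cz) (hΔ : 0 < Δ)
    (z : ℝ → EuclideanSpace ℝ (Fin n))
    (hz0 : ‖z 0‖ ≤ Δ)
    (hgrid : ∀ j : ℕ, ‖z (j * ε)‖ ≤ ‖z 0‖ * Real.exp (-γbar * j * ε))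
    (hinterp : ∀ j : ℕ, ∀ t ∈ Set.Icc ((j : ℝ) * ε) ((j + 1 : ℝ) * ε),
      ‖z t - z (j * ε)‖ ≤ cz * ε ^ ((1:ℝ)/4) * ‖z (j * ε)‖ ^ ((1:ℝ)/4)) :
    ∀ t : ℝ, 0 ≤ t →
      ‖z t‖ ≤ Real.exp (γbar * ε / 4) * (Δ ^ ((3:ℝ)/4) + cz)
                * ‖z 0‖ ^ ((1:ℝ)/4) * Real.exp (-γbar * t / 4) := by
  intro t ht
  set j : ℕ := ⌊t / ε⌋₊ with hj
  have hjle : (j : ℝ) * ε ≤ t := by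
    have := Nat.floor_le (show 0 ≤ t / ε by positivity)
    calc (j : ℝ) * ε ≤ (t / ε) * ε := by nlinarith
      _ = t := by field_simp
  have htlt : t ≤ ((j : ℝ) + 1) * ε := by
    have := (Nat.lt_floor_add_one (t / ε)).le
    calc t = (t / ε) * ε := by field_simp
      _ ≤ ((j : ℝ) + 1) * ε := by nlinarith
  set a := ‖z ((j : ℝ) * ε)‖ with hadef
  set b := ‖z 0‖ with hbdef
  have ha0 : 0 ≤ a := norm_nonneg _
  have hb0 : 0 ≤ b := norm_nonneg _
  have hgj : a ≤ b * Real.exp (-γbar * j * ε) := hgrid j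
  set c : ℝ := b * Real.exp (-γbar * j * ε) with hcdef
  have hc0 : 0 ≤ c := by positivity
  have haΔ : a ≤ Δ := by
    have hexp : Real.exp (-γbar * j * ε) ≤ 1 := by
      apply Real.exp_le_one_iff.mpr
      have : (0:ℝ) ≤ γbar * j * ε := by positivity
      nlinarith
    nlinarith
  have hsplit : a ≤ Δ ^ ((3:ℝ)/4) * c ^ ((1:ℝ)/4) :=
    aux_rpow_split a Δ c ha0 hΔ.le hc0 haΔ hgj
  -- bound ‖z t‖
  have hmem : t ∈ Set.Icc ((j : ℝ) * ε) ((j + 1 : ℝ) * ε) := ⟨hjle, htlt⟩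
  have hz : ‖z t‖ ≤ a + cz * ε ^ ((1:ℝ)/4) * a ^ ((1:ℝ)/4) := by
    have h1 : ‖z t‖ - a ≤ ‖z t - z ((j : ℝ) * ε)‖ := norm_sub_norm_le _ _
    have h2 := hinterp j t hmem
    linarith
  have hε14 : ε ^ ((1:ℝ)/4) ≤ 1 := by
    apply Real.rpow_le_one hε.le hε1 (by norm_num)
  have ha14 : a ^ ((1:ℝ)/4) ≤ c ^ ((1:ℝ)/4) :=
    Real.rpow_le_rpow ha0 hgj (by norm_num)
  have hstep : ‖z t‖ ≤ (Δ ^ ((3:ℝ)/4) + cz) * c ^ ((1:ℝ)/4) := by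
    have h3 : cz * ε ^ ((1:ℝ)/4) * a ^ ((1:ℝ)/4) ≤ cz * c ^ ((1:ℝ)/4) := by
      have h4 : a ^ ((1:ℝ)/4) ≥ 0 := by positivity
      calc cz * ε ^ ((1:ℝ)/4) * a ^ ((1:ℝ)/4) ≤ cz * 1 * a ^ ((1:ℝ)/4) :=
          mul_le_mul_of_nonneg_right (by nlinarith) h4
        _ = cz * a ^ ((1:ℝ)/4) := by ring
        _ ≤ cz * c ^ ((1:ℝ)/4) := mul_le_mul_of_nonneg_left ha14 hcz.le
    nlinarith
  -- rewrite c^{1/4}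
  have hc14 : c ^ ((1:ℝ)/4) = b ^ ((1:ℝ)/4) * Real.exp (-γbar * j * ε / 4) := by
    rw [hcdef, Real.mul_rpow hb0 (Real.exp_pos _).le, ← Real.exp_log (Real.exp_pos (-γbar * j * ε)),
      ← Real.exp_mul, Real.log_exp]
    ring_nf
  have hexpbd : Real.exp (-γbar * j * ε / 4) ≤
      Real.exp (γbar * ε / 4) * Real.exp (-γbar * t / 4) := by
    rw [← Real.exp_add]
    apply Real.exp_le_exp.mpr
    nlinarith
  have hb14 : 0 ≤ b ^ ((1:ℝ)/4) := by positivity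
  have hsum : 0 ≤ Δ ^ ((3:ℝ)/4) + cz := by positivity
  calc ‖z t‖ ≤ (Δ ^ ((3:ℝ)/4) + cz) * (b ^ ((1:ℝ)/4) * Real.exp (-γbar * j * ε / 4)) := by
        rw [← hc14]; exact hstep
    _ ≤ (Δ ^ ((3:ℝ)/4) + cz) * (b ^ ((1:ℝ)/4) *
        (Real.exp (γbar * ε / 4) * Real.exp (-γbar * t / 4))) := by
        apply mul_le_mul_of_nonneg_left _ hsum
        exact mul_le_mul_of_nonneg_left hexpbd hb14
    _ = Real.exp (γbar * ε / 4) * (Δ ^ ((3:ℝ)/4) + cz)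
          * b ^ ((1:ℝ)/4) * Real.exp (-γbar * t / 4) := by ring
end
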